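/- arXiv:1704.01265 — 2 statements merged into one kernel-verified Lean document; each statement's English description precedes it below -/
import Mathlib

section
/- Let W = [Uᵀ Vᵀ]ᵀ ∈ ℝ^{(p+q)×r} satisfy the balance condition UᵀU = VᵀV, and let Ŵ = [Uᵀ −Vᵀ]ᵀ. Then for every D = [D_Uᵀ D_Vᵀ]ᵀ ∈ ℝ^{(p+q)×r}, the on-diagonal and off-diagonal blocks of D Wᵀ have equal Frobenius energy: ‖D_U Uᵀ‖_F² + ‖D_V Vᵀ‖_F² = ‖D_U Vᵀ‖_F² + ‖D_V Uᵀ‖_F². -/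
open Matrix

noncomputable def singularValues {m n : Type*} [Fintype m] [Fintype n] [DecidableEq n]
    (X : Matrix m n ℝ) : n → ℝ :=
  fun i => Real.sqrt ((show (Xᵀ * X).IsHermitian by
    simpa [Matrix.conjTranspose_eq_transpose_of_trivial] using
      Matrix.isHermitian_conjTranspose_mul_self X).eigenvalues i)

noncomputable def nuclearNorm {m n : Type*} [Fintype m] [Fintype n] [DecidableEq n]
    (X : Matrix m n ℝ) : ℝ := ∑ i, singularValues X i

noncomputable def frobNorm {m n : Type*} [Fintype m] [Fintype n] (X : Matrix m n ℝ) : ℝ :=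
  Real.sqrt ((Xᵀ * X).trace)

noncomputable def matSpectralNorm {m n : Type*} [Fintype m] [Fintype n] [DecidableEq m] [DecidableEq n]
    (X : Matrix m n ℝ) : ℝ :=
  ‖LinearMap.toContinuousLinearMap (Matrix.toEuclideanLin X)‖

noncomputable def smallestNonzeroSV {m n : Type*} [Fintype m] [Fintype n] [DecidableEq n]
    (X : Matrix m n ℝ) : ℝ :=
  sInf {s | (∃ i, singularValues X i = s) ∧ s ≠ 0}

noncomputable def distO {n r : ℕ} (W₁ W₂ : Matrix (Fin n) (Fin r) ℝ) : ℝ :=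
  sInf {d | ∃ R : Matrix (Fin r) (Fin r) ℝ, Rᵀ * R = 1 ∧ d = frobNorm (W₁ - W₂ * R)}

/-! The squared Frobenius norm of `A * Bᵀ` is `tr (AᵀA · BᵀB)`, so it sees `B` only through its
Gram matrix `BᵀB`. The balance condition `UᵀU = VᵀV` therefore lets `U` and `V` be exchanged
in `DU * Uᵀ` and in `DV * Vᵀ`. -/

theorem Matrix.trace_transpose_mul_self_mul_transpose {m n k R : Type*} [Fintype m] [Fintype n]
    [Fintype k] [CommSemiring R] (A : Matrix m n R) (B : Matrix k n R) :
    ((A * Bᵀ)ᵀ * (A * Bᵀ)).trace = (Aᵀ * A * (Bᵀ * B)).trace := by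
  calc ((A * Bᵀ)ᵀ * (A * Bᵀ)).trace = (B * (Aᵀ * A * Bᵀ)).trace := by
        simp only [transpose_mul, transpose_transpose, Matrix.mul_assoc]
    _ = (Aᵀ * A * (Bᵀ * B)).trace := by rw [trace_mul_comm, Matrix.mul_assoc]

theorem frobNorm_mul_transpose_congr {m n k l : Type*} [Fintype m] [Fintype n] [Fintype k]
    [Fintype l] (A : Matrix m n ℝ) {B : Matrix k n ℝ} {C : Matrix l n ℝ} (h : Bᵀ * B = Cᵀ * C) :
    frobNorm (A * Bᵀ) = frobNorm (A * Cᵀ) := by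
  unfold frobNorm
  rw [trace_transpose_mul_self_mul_transpose, trace_transpose_mul_self_mul_transpose, h]

theorem stmt3 {p q r : ℕ}
    (U : Matrix (Fin p) (Fin r) ℝ) (V : Matrix (Fin q) (Fin r) ℝ)
    (hbal : Uᵀ * U = Vᵀ * V)
    (DU : Matrix (Fin p) (Fin r) ℝ) (DV : Matrix (Fin q) (Fin r) ℝ) :
    frobNorm (DU * Uᵀ) ^ 2 + frobNorm (DV * Vᵀ) ^ 2
      = frobNorm (DU * Vᵀ) ^ 2 + frobNorm (DV * Uᵀ) ^ 2 := by
  rw [frobNorm_mul_transpose_congr DU hbal, frobNorm_mul_transpose_congr DV hbal.symm]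
end

section
/- Let W₁, W₂ ∈ ℝ^{n×r} with W₁ᵀW₂ = W₂ᵀW₁ positive semidefinite, and let Q be a matrix with orthonormal columns spanning the column space of W₁. Then ‖(W₁ − W₂)W₁ᵀ‖_F² ≤ (1/8)‖W₁W₁ᵀ − W₂W₂ᵀ‖_F² + (3 + 1/(2(√2 − 1))) ‖(W₁W₁ᵀ − W₂W₂ᵀ) Q Qᵀ‖_F². -/
open Matrix

attribute [local instance] Matrix.normedAddCommGroup Matrix.normedSpace

/-!
Write `P = QQᵀ`, `B₁ = PB`, `B₂ = (1 - P)B`, `D = W₁W₁ᵀ - W₂W₂ᵀ` and `A = W₁`, `B = W₂`, so that `PA = A`.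
Splitting every matrix into blocks along `P` and `1 - P` gives
`‖(A - B)Aᵀ‖² = ‖(A - B₁)Aᵀ‖² + ‖B₂Aᵀ‖²`,
`‖DP‖² = ‖AAᵀ - B₁B₁ᵀ‖² + ‖B₂B₁ᵀ‖²` and `‖D‖² = ‖AAᵀ - B₁B₁ᵀ‖² + 2‖B₂B₁ᵀ‖² + ‖B₂B₂ᵀ‖²`.

Inside the range of `P`, put `Δ = A - B₁`, `Σ = A + B₁` and `M = AᵀA - B₁ᵀB₁`. Since
`ΣᵀΣ - ΔᵀΔ = 4AᵀB₁ ⪰ 0` and `2ΔAᵀ = ΔΣᵀ + ΔΔᵀ`, we get `‖ΔAᵀ‖ ≤ ‖ΔΣᵀ‖`. Since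
`2(AAᵀ - B₁B₁ᵀ) = ΔΣᵀ + ΣΔᵀ` and `ΔᵀΣ = M`, we get `‖ΔΣᵀ‖² + ‖M‖² = 2‖AAᵀ - B₁B₁ᵀ‖²`.
The part outside the range is `‖B₂Aᵀ‖² = ⟨B₂ᵀB₂, M⟩ + ‖B₂B₁ᵀ‖²`, and AM-GM bounds the inner
product by `‖B₂B₂ᵀ‖²/8 + 2‖M‖²`. Adding these up gives the bound with the constant `31/8`, and
`31/8 ≤ 3 + 1/(2(√2 - 1))`.
-/

theorem mul_sub_mul_transpose_mul {R l m n p : Type*} [CommRing R] [Fintype l] [Fintype n]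
    (L : Matrix m n R) (X Y : Matrix n l R) (M : Matrix n p R) :
    L * (X * Xᵀ - Y * Yᵀ) * M = L * X * (Mᵀ * X)ᵀ - L * Y * (Mᵀ * Y)ᵀ := by
  simp only [Matrix.mul_sub, Matrix.sub_mul, transpose_mul, transpose_transpose, Matrix.mul_assoc]

theorem transpose_mul_comm_of_posSemidef {n r : Type*} [Fintype n] {A B : Matrix n r ℝ}
    (hpsd : (Aᵀ * B).PosSemidef) : Bᵀ * A = Aᵀ * B := by
  simpa [conjTranspose_eq_transpose_of_trivial] using hpsd.isHermitian.eq

section Frobenius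

variable {m n p : Type*} [Fintype m] [Fintype n] [Fintype p]

theorem trace_transpose_mul_self_nonneg (X : Matrix m n ℝ) : 0 ≤ (Xᵀ * X).trace := by
  simpa using (posSemidef_conjTranspose_mul_self X).trace_nonneg

theorem frobNorm_sq (X : Matrix m n ℝ) : frobNorm X ^ 2 = (Xᵀ * X).trace :=
  Real.sq_sqrt (trace_transpose_mul_self_nonneg X)

theorem frobNorm_neg (X : Matrix m n ℝ) : frobNorm (-X) = frobNorm X := by
  simp [frobNorm]

theorem frobNorm_transpose (X : Matrix m n ℝ) : frobNorm Xᵀ = frobNorm X := by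
  rw [frobNorm, frobNorm, transpose_transpose, trace_mul_comm]

theorem frobNorm_mul_transpose_comm (X Y : Matrix m n ℝ) :
    frobNorm (X * Yᵀ) = frobNorm (Y * Xᵀ) := by
  rw [← frobNorm_transpose, transpose_mul, transpose_transpose]

theorem frobNorm_smul_sq (c : ℝ) (X : Matrix m n ℝ) :
    frobNorm (c • X) ^ 2 = c ^ 2 * frobNorm X ^ 2 := by
  rw [frobNorm_sq, frobNorm_sq, transpose_smul, Matrix.smul_mul, Matrix.mul_smul, smul_smul,
    trace_smul, smul_eq_mul, sq]

theorem trace_transpose_mul_comm (X Y : Matrix m n ℝ) : (Yᵀ * X).trace = (Xᵀ * Y).trace := by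
  rw [← trace_transpose, transpose_mul, transpose_transpose]

theorem frobNorm_add_sq (X Y : Matrix m n ℝ) :
    frobNorm (X + Y) ^ 2 = frobNorm X ^ 2 + 2 * (Xᵀ * Y).trace + frobNorm Y ^ 2 := by
  rw [frobNorm_sq, frobNorm_sq, frobNorm_sq, transpose_add, Matrix.add_mul, Matrix.mul_add,
    Matrix.mul_add, trace_add, trace_add, trace_add, trace_transpose_mul_comm X Y]
  ring

theorem two_mul_trace_transpose_mul_le (X Y : Matrix m n ℝ) :
    2 * (Xᵀ * Y).trace ≤ frobNorm X ^ 2 + frobNorm Y ^ 2 := by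
  have h := frobNorm_add_sq X (-Y)
  rw [frobNorm_neg, Matrix.mul_neg, trace_neg] at h
  nlinarith [sq_nonneg (frobNorm (X + -Y))]

theorem frobNorm_add_sq_le (X Y : Matrix m n ℝ) :
    frobNorm (X + Y) ^ 2 ≤ 2 * frobNorm X ^ 2 + 2 * frobNorm Y ^ 2 := by
  rw [frobNorm_add_sq]
  linarith [two_mul_trace_transpose_mul_le X Y]

theorem frobNorm_mul_transpose_sq (X : Matrix m n ℝ) (Y : Matrix p n ℝ) :
    frobNorm (X * Yᵀ) ^ 2 = (Xᵀ * X * (Yᵀ * Y)).trace := by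
  rw [frobNorm_sq, transpose_mul, transpose_transpose, Matrix.mul_assoc, trace_mul_comm,
    Matrix.mul_assoc, Matrix.mul_assoc, Matrix.mul_assoc]

theorem frobNorm_transpose_mul_self_sq (X : Matrix m n ℝ) :
    frobNorm (Xᵀ * X) ^ 2 = frobNorm (X * Xᵀ) ^ 2 := by
  have h := frobNorm_mul_transpose_sq Xᵀ Xᵀ
  rw [transpose_transpose] at h
  rw [h, frobNorm_mul_transpose_sq, ← Matrix.mul_assoc, trace_mul_comm]
  simp only [Matrix.mul_assoc]

theorem frobNorm_sq_eq_mul_add_one_sub_mul [DecidableEq m] {P : Matrix m m ℝ} (hPs : P.IsSymm)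
    (hPi : IsIdempotentElem P) (X : Matrix m n ℝ) :
    frobNorm X ^ 2 = frobNorm (P * X) ^ 2 + frobNorm ((1 - P) * X) ^ 2 := by
  have hcross : ((P * X)ᵀ * ((1 - P) * X)).trace = 0 := by
    rw [transpose_mul, hPs.eq, Matrix.mul_assoc, ← Matrix.mul_assoc P, hPi.mul_one_sub_self,
      Matrix.zero_mul, Matrix.mul_zero, trace_zero]
  have hX : P * X + (1 - P) * X = X := by rw [← Matrix.add_mul, add_sub_cancel, Matrix.one_mul]
  conv_lhs => rw [← hX]
  rw [frobNorm_add_sq, hcross, mul_zero, add_zero]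

theorem frobNorm_sq_eq_mul_add_mul_one_sub [DecidableEq n] {P : Matrix n n ℝ} (hPs : P.IsSymm)
    (hPi : IsIdempotentElem P) (X : Matrix m n ℝ) :
    frobNorm X ^ 2 = frobNorm (X * P) ^ 2 + frobNorm (X * (1 - P)) ^ 2 := by
  rw [← frobNorm_transpose X, frobNorm_sq_eq_mul_add_one_sub_mul hPs hPi Xᵀ,
    ← frobNorm_transpose (X * P), ← frobNorm_transpose (X * (1 - P)), transpose_mul, transpose_mul,
    hPs.eq, (isSymm_one.sub hPs).eq]

theorem frobNorm_mul_transpose_sq_le_of_posSemidef (Z : Matrix m n ℝ) {X Y : Matrix p n ℝ}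
    (h : (Yᵀ * Y - Xᵀ * X).PosSemidef) : frobNorm (Z * Xᵀ) ^ 2 ≤ frobNorm (Z * Yᵀ) ^ 2 := by
  rw [frobNorm_mul_transpose_sq, frobNorm_mul_transpose_sq, ← sub_nonneg, ← trace_sub,
    ← Matrix.mul_sub, Matrix.mul_assoc, trace_mul_comm, Matrix.mul_assoc]
  simpa [Matrix.mul_assoc] using (h.mul_mul_conjTranspose_same Z).trace_nonneg

theorem frobNorm_sub_mul_transpose_sq_le {A B : Matrix n p ℝ} (hpsd : (Aᵀ * B).PosSemidef) :
    frobNorm ((A - B) * Aᵀ) ^ 2 ≤ frobNorm ((A - B) * (A + B)ᵀ) ^ 2 := by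
  have hgap : (A + B)ᵀ * (A + B) - (A - B)ᵀ * (A - B) = (4 : ℝ) • (Aᵀ * B) := by
    simp only [transpose_add, transpose_sub, Matrix.add_mul, Matrix.mul_add, Matrix.sub_mul,
      Matrix.mul_sub, transpose_mul_comm_of_posSemidef hpsd]
    module
  have hdiff : frobNorm ((A - B) * (A - B)ᵀ) ^ 2 ≤ frobNorm ((A - B) * (A + B)ᵀ) ^ 2 :=
    frobNorm_mul_transpose_sq_le_of_posSemidef _ (hgap ▸ hpsd.smul (by norm_num))
  have htwice : (A - B) * (A + B)ᵀ + (A - B) * (A - B)ᵀ = (2 : ℝ) • ((A - B) * Aᵀ) := by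
    rw [← Matrix.mul_add, ← Matrix.mul_smul, ← transpose_add, ← transpose_smul]
    congr 2
    module
  have hpar := frobNorm_add_sq_le ((A - B) * (A + B)ᵀ) ((A - B) * (A - B)ᵀ)
  rw [htwice, frobNorm_smul_sq] at hpar
  linarith

theorem frobNorm_sub_mul_transpose_add_sq_add_sq {A B : Matrix n p ℝ} (hsym : Bᵀ * A = Aᵀ * B) :
    frobNorm ((A - B) * (A + B)ᵀ) ^ 2 + frobNorm (Aᵀ * A - Bᵀ * B) ^ 2
      = 2 * frobNorm (A * Aᵀ - B * Bᵀ) ^ 2 := by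
  set X := (A - B) * (A + B)ᵀ with hX
  have hM : (A - B)ᵀ * (A + B) = Aᵀ * A - Bᵀ * B := by
    simp only [transpose_sub, Matrix.mul_add, Matrix.sub_mul, hsym]
    abel
  have hMs : (Aᵀ * A - Bᵀ * B)ᵀ = Aᵀ * A - Bᵀ * B := by
    rw [transpose_sub, transpose_mul, transpose_mul, transpose_transpose, transpose_transpose]
  have hsum : X + Xᵀ = (2 : ℝ) • (A * Aᵀ - B * Bᵀ) := by
    simp only [hX, transpose_mul, transpose_transpose, transpose_add, transpose_sub,
      Matrix.mul_add, Matrix.sub_mul]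
    module
  have hcross : (Xᵀ * Xᵀ).trace = frobNorm (Aᵀ * A - Bᵀ * B) ^ 2 := by
    rw [frobNorm_sq, hMs, ← hM, hX, transpose_mul, transpose_transpose, Matrix.mul_assoc,
      trace_mul_comm]
    simp only [Matrix.mul_assoc]
  have h := frobNorm_add_sq X Xᵀ
  rw [hsum, frobNorm_smul_sq, hcross, frobNorm_transpose] at h
  linarith

theorem frobNorm_mul_transpose_sq_le (A B : Matrix n p ℝ) (C : Matrix m p ℝ) :
    frobNorm (C * Aᵀ) ^ 2 ≤ frobNorm (C * Bᵀ) ^ 2 + frobNorm (C * Cᵀ) ^ 2 / 8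
      + 2 * frobNorm (Aᵀ * A - Bᵀ * B) ^ 2 := by
  have hsplit : frobNorm (C * Aᵀ) ^ 2
      = ((Cᵀ * C)ᵀ * (Aᵀ * A - Bᵀ * B)).trace + frobNorm (C * Bᵀ) ^ 2 := by
    rw [frobNorm_mul_transpose_sq, frobNorm_mul_transpose_sq, transpose_mul, transpose_transpose,
      Matrix.mul_sub, trace_sub]
    ring
  have hamgm := two_mul_trace_transpose_mul_le (Cᵀ * C) ((4 : ℝ) • (Aᵀ * A - Bᵀ * B))
  rw [Matrix.mul_smul, trace_smul, smul_eq_mul, frobNorm_smul_sq,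
    frobNorm_transpose_mul_self_sq] at hamgm
  linarith

theorem frobNorm_sub_mul_transpose_sq_add_sq_le {A B : Matrix n p ℝ} (hpsd : (Aᵀ * B).PosSemidef)
    (C : Matrix m p ℝ) :
    frobNorm ((A - B) * Aᵀ) ^ 2 + frobNorm (C * Aᵀ) ^ 2
      ≤ 4 * frobNorm (A * Aᵀ - B * Bᵀ) ^ 2 + frobNorm (C * Bᵀ) ^ 2
        + frobNorm (C * Cᵀ) ^ 2 / 8 := by
  have := frobNorm_sub_mul_transpose_sq_le hpsd
  have := frobNorm_sub_mul_transpose_add_sq_add_sq (transpose_mul_comm_of_posSemidef hpsd)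
  have := frobNorm_mul_transpose_sq_le A B C
  linarith [sq_nonneg (frobNorm ((A - B) * (A + B)ᵀ))]

end Frobenius

theorem mul_transpose_mul_eq_of_range_le {R n k r : Type*} [CommRing R] [Fintype n] [Fintype k]
    [Fintype r] [DecidableEq k] {Q : Matrix n k R} (hQ : Qᵀ * Q = 1) {W : Matrix n r R}
    (h : LinearMap.range W.mulVecLin ≤ LinearMap.range Q.mulVecLin) : Q * Qᵀ * W = W := by
  refine ext_iff_mulVec.mpr fun v => ?_
  obtain ⟨y, hy⟩ := h ⟨v, rfl⟩
  rw [mulVecLin_apply, mulVecLin_apply] at hy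
  rw [← mulVec_mulVec, ← hy, mulVec_mulVec, Matrix.mul_assoc, hQ, Matrix.mul_one]

theorem frobNorm_sub_mul_transpose_sq_le_of_isIdempotentElem {n r : Type*} [Fintype n] [Fintype r]
    [DecidableEq n] {A B : Matrix n r ℝ} {P : Matrix n n ℝ} (hPs : P.IsSymm)
    (hPi : IsIdempotentElem P) (hPA : P * A = A) (hpsd : (Aᵀ * B).PosSemidef) :
    frobNorm ((A - B) * Aᵀ) ^ 2
      ≤ 1 / 8 * frobNorm (A * Aᵀ - B * Bᵀ) ^ 2 + 31 / 8 * frobNorm ((A * Aᵀ - B * Bᵀ) * P) ^ 2 := by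
  have hPcs : (1 - P).IsSymm := isSymm_one.sub hPs
  have hPcA : (1 - P) * A = 0 := by rw [Matrix.sub_mul, Matrix.one_mul, hPA, sub_self]
  have hpsdP : (Aᵀ * (P * B)).PosSemidef := by
    rwa [← Matrix.mul_assoc, ← hPs.eq, ← transpose_mul, hPA]
  have hV : frobNorm ((A - B) * Aᵀ) ^ 2
      = frobNorm ((A - P * B) * Aᵀ) ^ 2 + frobNorm ((1 - P) * B * Aᵀ) ^ 2 := by
    rw [frobNorm_sq_eq_mul_add_one_sub_mul hPs hPi, ← Matrix.mul_assoc, ← Matrix.mul_assoc,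
      Matrix.mul_sub, Matrix.mul_sub, hPA, hPcA, zero_sub, Matrix.neg_mul, frobNorm_neg]
  have hDP : frobNorm ((A * Aᵀ - B * Bᵀ) * P) ^ 2
      = frobNorm (A * Aᵀ - P * B * (P * B)ᵀ) ^ 2 + frobNorm ((1 - P) * B * (P * B)ᵀ) ^ 2 := by
    rw [frobNorm_sq_eq_mul_add_one_sub_mul hPs hPi, ← Matrix.mul_assoc, ← Matrix.mul_assoc,
      mul_sub_mul_transpose_mul, mul_sub_mul_transpose_mul, hPs.eq, hPA, hPcA, Matrix.zero_mul,
      zero_sub, frobNorm_neg]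
  have hD : frobNorm (A * Aᵀ - B * Bᵀ) ^ 2
      = frobNorm (A * Aᵀ - P * B * (P * B)ᵀ) ^ 2 + 2 * frobNorm ((1 - P) * B * (P * B)ᵀ) ^ 2
        + frobNorm ((1 - P) * B * ((1 - P) * B)ᵀ) ^ 2 := by
    rw [frobNorm_sq_eq_mul_add_mul_one_sub hPs hPi, hDP,
      frobNorm_sq_eq_mul_add_one_sub_mul hPs hPi ((A * Aᵀ - B * Bᵀ) * (1 - P)),
      ← Matrix.mul_assoc, ← Matrix.mul_assoc, mul_sub_mul_transpose_mul, mul_sub_mul_transpose_mul,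
      hPcs.eq, hPA, hPcA, transpose_zero, Matrix.mul_zero, Matrix.zero_mul, zero_sub, zero_sub,
      frobNorm_neg, frobNorm_neg, frobNorm_mul_transpose_comm (P * B)]
    ring
  have hcore := frobNorm_sub_mul_transpose_sq_add_sq_le hpsdP ((1 - P) * B)
  linarith [sq_nonneg (frobNorm ((1 - P) * B * (P * B)ᵀ))]

theorem stmt13_general {n r k : ℕ} (W₁ W₂ : Matrix (Fin n) (Fin r) ℝ)
    (hpsd : (W₁ᵀ * W₂).PosSemidef)
    (Q : Matrix (Fin n) (Fin k) ℝ) (hQ : Qᵀ * Q = 1)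
    (hrange : LinearMap.range Q.mulVecLin = LinearMap.range W₁.mulVecLin) :
    frobNorm ((W₁ - W₂) * W₁ᵀ) ^ 2
      ≤ 1 / 8 * frobNorm (W₁ * W₁ᵀ - W₂ * W₂ᵀ) ^ 2
        + (3 + 1 / (2 * (Real.sqrt 2 - 1)))
          * frobNorm ((W₁ * W₁ᵀ - W₂ * W₂ᵀ) * (Q * Qᵀ)) ^ 2 := by
  have hPs : (Q * Qᵀ).IsSymm := by rw [IsSymm, transpose_mul, transpose_transpose]
  have hPi : IsIdempotentElem (Q * Qᵀ) := by
    rw [IsIdempotentElem, Matrix.mul_assoc, ← Matrix.mul_assoc Qᵀ, hQ, Matrix.one_mul]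
  have hPW : Q * Qᵀ * W₁ = W₁ := mul_transpose_mul_eq_of_range_le hQ hrange.ge
  have hconst : (31 : ℝ) / 8 ≤ 3 + 1 / (2 * (Real.sqrt 2 - 1)) := by
    have h1 : 1 < Real.sqrt 2 := by norm_num [Real.lt_sqrt]
    have h2 : Real.sqrt 2 ≤ 11 / 7 := Real.sqrt_le_iff.mpr ⟨by norm_num, by norm_num⟩
    rw [← sub_le_iff_le_add', le_div_iff₀ (by linarith)]
    linarith
  calc frobNorm ((W₁ - W₂) * W₁ᵀ) ^ 2
      ≤ 1 / 8 * frobNorm (W₁ * W₁ᵀ - W₂ * W₂ᵀ) ^ 2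
        + 31 / 8 * frobNorm ((W₁ * W₁ᵀ - W₂ * W₂ᵀ) * (Q * Qᵀ)) ^ 2 :=
      frobNorm_sub_mul_transpose_sq_le_of_isIdempotentElem hPs hPi hPW hpsd
    _ ≤ _ := by gcongr

theorem stmt13 {n r k : ℕ} (W₁ W₂ : Matrix (Fin n) (Fin r) ℝ)
    (hsym : W₁ᵀ * W₂ = W₂ᵀ * W₁) (hpsd : (W₁ᵀ * W₂).PosSemidef)
    (Q : Matrix (Fin n) (Fin k) ℝ) (hQ : Qᵀ * Q = 1)
    (hrange : LinearMap.range Q.mulVecLin = LinearMap.range W₁.mulVecLin) :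
    frobNorm ((W₁ - W₂) * W₁ᵀ) ^ 2
      ≤ 1 / 8 * frobNorm (W₁ * W₁ᵀ - W₂ * W₂ᵀ) ^ 2
        + (3 + 1 / (2 * (Real.sqrt 2 - 1)))
          * frobNorm ((W₁ * W₁ᵀ - W₂ * W₂ᵀ) * (Q * Qᵀ)) ^ 2 :=
  stmt13_general W₁ W₂ hpsd Q hQ hrange
end
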